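/- Let A(t) be an n×l real matrix function of class C¹ on [a,b] with l ≤ n, and set B(t) = A(t)ᵀA(t). Suppose det B(t) ≠ 0 for t ∈ (a,b), det B(a) ≠ 0, det B(b) = 0, and there exists h_b > 0 with det B(b+t) = h_b² t² + o(t²) as t → 0−. Fix α > 0, γ > 0, κ > 0. Then there exists λ > 0, depending only on A, α, γ and κ, such that for every continuous ℝˡ-valued function r on [a,b] satisfying ‖r‖_{i,a,b} ≥ α‖r‖_{a,b} and |A(t)r(t)| ≤ κ(b−t)‖r‖_{a,b} for t ∈ (b−γ, b], one has ‖Ar‖_{i,a,b} ≥ λ‖r‖_{i,a,b}. -/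

import Mathlib

/-!
On `[a, c]` with `c < b` the Gram determinant `det (AᵀA)` does not vanish, so each `A t` is
injective there and, by compactness of `[a, c] × sphere`, `|A t v| ≥ m |v|` uniformly. Taking
`b - c ≤ α / 2`, the bound `∫|r| ≥ α ‖r‖_∞` forces the tail `[c, b]` to carry at most half of
`∫|r|`, hence `∫|A r| ≥ ∫_a^c |A r| ≥ m ∫_a^c |r| ≥ (m / 2) ∫|r|`.
-/

open Set Filter Asymptotics Topology MeasureTheory Matrix

/-- Euclidean norm of a vector in `ℝˡ`. -/
noncomputable def euclNorm {l : ℕ} (v : Fin l → ℝ) : ℝ := Real.sqrt (∑ i, v i ^ 2)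

/-- `‖q‖_{a,b} = max_{t ∈ [a,b]} |q(t)|`. -/
noncomputable def supNorm {l : ℕ} (a b : ℝ) (q : ℝ → Fin l → ℝ) : ℝ :=
  sSup ((fun t => euclNorm (q t)) '' Set.Icc a b)

/-- `‖q‖_{i,a,b} = ∫_a^b |q(t)| dt`. -/
noncomputable def intNorm {l : ℕ} (a b : ℝ) (q : ℝ → Fin l → ℝ) : ℝ :=
  ∫ t in a..b, euclNorm (q t)

lemma euclNorm_eq_norm_toLp {l : ℕ} (v : Fin l → ℝ) : euclNorm v = ‖WithLp.toLp 2 v‖ := by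
  simp [euclNorm, EuclideanSpace.norm_eq]

lemma euclNorm_nonneg {l : ℕ} (v : Fin l → ℝ) : 0 ≤ euclNorm v := Real.sqrt_nonneg _

lemma ContinuousOn.euclNorm {X : Type*} [TopologicalSpace X] {l : ℕ} {s : Set X}
    {r : X → Fin l → ℝ} (hr : ContinuousOn r s) : ContinuousOn (fun t => euclNorm (r t)) s := by
  simp only [euclNorm_eq_norm_toLp]
  exact ((PiLp.continuous_toLp 2 _).comp_continuousOn hr).norm

lemma ContinuousOn.matrix_mulVec {X m n R : Type*} [TopologicalSpace X] [Fintype n]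
    [NonUnitalNonAssocSemiring R] [TopologicalSpace R] [ContinuousAdd R] [ContinuousMul R]
    {s : Set X} {A : X → Matrix m n R} {r : X → n → R} (hA : ContinuousOn A s)
    (hr : ContinuousOn r s) : ContinuousOn (fun t => A t *ᵥ r t) s :=
  continuousOn_iff_continuous_domRestrict.2 (hA.domRestrict.matrix_mulVec hr.domRestrict)

lemma euclNorm_le_supNorm {l : ℕ} {a b : ℝ} {r : ℝ → Fin l → ℝ}
    (hr : ContinuousOn r (Icc a b)) {t : ℝ} (ht : t ∈ Icc a b) :
    euclNorm (r t) ≤ supNorm a b r :=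
  le_csSup (isCompact_Icc.image_of_continuousOn hr.euclNorm).bddAbove ⟨t, ht, rfl⟩

lemma Matrix.mulVec_injective_of_det_mul_ne_zero {m n R : Type*} [Fintype m] [Fintype n]
    [DecidableEq n] [CommRing R] [NoZeroDivisors R] {C : Matrix n m R} {A : Matrix m n R}
    (h : (C * A).det ≠ 0) : Function.Injective A.mulVec := by
  refine Function.Injective.of_comp (f := C.mulVec) ?_
  simpa only [Function.comp_def, mulVec_mulVec] using mulVec_injective_of_det_ne_zero h

theorem IsCompact.exists_pos_mul_norm_le_norm_apply {X E F : Type*} [TopologicalSpace X]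
    [NormedAddCommGroup E] [NormedSpace ℝ E] [FiniteDimensional ℝ E]
    [NormedAddCommGroup F] [NormedSpace ℝ F] {K : Set X} (hK : IsCompact K)
    {f : X → E →L[ℝ] F} (hf : ContinuousOn f K) (hinj : ∀ x ∈ K, Function.Injective (f x)) :
    ∃ m > 0, ∀ x ∈ K, ∀ v, m * ‖v‖ ≤ ‖f x v‖ := by
  have hcont : ContinuousOn (fun p : X × E => ‖f p.1 p.2‖) (K ×ˢ Metric.sphere 0 1) :=
    ((hf.comp continuousOn_fst fun p hp => hp.1).clm_apply continuousOn_snd).norm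
  have hpos : ∀ p ∈ K ×ˢ Metric.sphere (0 : E) 1, 0 < ‖f p.1 p.2‖ := by
    rintro ⟨x, v⟩ ⟨hx, hv⟩
    refine norm_pos_iff.2 fun h => ?_
    rw [(injective_iff_map_eq_zero _).1 (hinj x hx) v h] at hv
    simp at hv
  obtain ⟨m, hm, hle⟩ := (hK.prod (isCompact_sphere 0 1)).exists_forall_le' hcont hpos
  refine ⟨m, hm, fun x hx v => ?_⟩
  rcases eq_or_ne v 0 with rfl | hv
  · simp
  have hunit := hle (x, ‖v‖⁻¹ • v) ⟨hx, by simp [norm_smul, hv]⟩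
  rw [map_smul, norm_smul, norm_inv, norm_norm] at hunit
  rwa [le_inv_mul_iff₀ (norm_pos_iff.2 hv), mul_comm] at hunit

lemma half_mul_integral_le_integral_of_le_on_head {f g : ℝ → ℝ} {a b c m M : ℝ}
    (hac : a ≤ c) (hcb : c ≤ b) (hf : IntervalIntegrable f volume a b)
    (hg : IntervalIntegrable g volume a b) (hm : 0 ≤ m) (hf0 : ∀ t ∈ Icc c b, 0 ≤ f t)
    (hfg : ∀ t ∈ Icc a c, m * g t ≤ f t) (hgM : ∀ t ∈ Icc c b, g t ≤ M)
    (htail : 2 * ((b - c) * M) ≤ ∫ t in a..b, g t) :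
    m / 2 * ∫ t in a..b, g t ≤ ∫ t in a..b, f t := by
  have hsub : uIcc a c ⊆ uIcc a b := uIcc_subset_uIcc_left (mem_uIcc_of_le hac hcb)
  have hsub' : uIcc c b ⊆ uIcc a b := uIcc_subset_uIcc_right (mem_uIcc_of_le hac hcb)
  have hg_split := intervalIntegral.integral_add_adjacent_intervals (hg.mono_set hsub)
    (hg.mono_set hsub')
  have hf_split := intervalIntegral.integral_add_adjacent_intervals (hf.mono_set hsub)
    (hf.mono_set hsub')
  have hg_tail : ∫ t in c..b, g t ≤ (b - c) * M := by
    simpa using intervalIntegral.integral_mono_on hcb (hg.mono_set hsub')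
      intervalIntegrable_const hgM
  have hfg_head : m * ∫ t in a..c, g t ≤ ∫ t in a..c, f t := by
    rw [← intervalIntegral.integral_const_mul]
    exact intervalIntegral.integral_mono_on hac ((hg.mono_set hsub).const_mul m)
      (hf.mono_set hsub) hfg
  have hf_tail : 0 ≤ ∫ t in c..b, f t := intervalIntegral.integral_nonneg hcb hf0
  have hg_head : (∫ t in a..b, g t) / 2 ≤ ∫ t in a..c, g t := by linarith
  nlinarith [mul_le_mul_of_nonneg_left hg_head hm]

lemma exists_pos_mul_euclNorm_le_euclNorm_mulVec {X : Type*} [TopologicalSpace X] {n l : ℕ}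
    {K : Set X} (hK : IsCompact K) {A : X → Matrix (Fin n) (Fin l) ℝ} (hA : ContinuousOn A K)
    (hinj : ∀ x ∈ K, Function.Injective (A x).mulVec) :
    ∃ m > 0, ∀ x ∈ K, ∀ v, m * euclNorm v ≤ euclNorm (A x *ᵥ v) := by
  let F : X → EuclideanSpace ℝ (Fin l) →L[ℝ] EuclideanSpace ℝ (Fin n) :=
    fun x => LinearMap.toContinuousLinearMap (toEuclideanLin (A x))
  have hF_apply : ∀ x v, F x (WithLp.toLp 2 v) = WithLp.toLp 2 (A x *ᵥ v) := fun _ _ => rfl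
  have hF : ContinuousOn F K :=
    (LinearMap.continuous_of_finiteDimensional
      ((LinearMap.toContinuousLinearMap : (EuclideanSpace ℝ (Fin l) →ₗ[ℝ] EuclideanSpace ℝ (Fin n))
        ≃ₗ[ℝ] _).toLinearMap ∘ₗ toEuclideanLin.toLinearMap)).comp_continuousOn hA
  have hF_inj : ∀ x ∈ K, Function.Injective (F x) := fun x hx v w h =>
    WithLp.ofLp_injective 2 (hinj x hx (congrArg WithLp.ofLp h))
  obtain ⟨m, hm, hmF⟩ := hK.exists_pos_mul_norm_le_norm_apply hF hF_inj
  refine ⟨m, hm, fun x hx v => ?_⟩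
  simpa only [euclNorm_eq_norm_toLp, ← hF_apply] using hmF x hx (WithLp.toLp 2 v)

theorem stmt9_general (n l : ℕ) (a b : ℝ) (hab : a < b)
    (A : ℝ → Matrix (Fin n) (Fin l) ℝ)
    (hA : ∀ i j, ContDiffOn ℝ 1 (fun t => A t i j) (Set.Icc a b))
    (B : ℝ → Matrix (Fin l) (Fin l) ℝ) (hB : ∀ t, B t = (A t)ᵀ * A t)
    (hdet : ∀ t ∈ Set.Ioo a b, (B t).det ≠ 0)
    (hdeta : (B a).det ≠ 0)
    (α γ κ : ℝ) (hα : 0 < α) :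
    ∃ lam > 0, ∀ r : ℝ → Fin l → ℝ, ContinuousOn r (Set.Icc a b) →
      intNorm a b r ≥ α * supNorm a b r →
      (∀ t, b - γ < t → t ≤ b → a ≤ t →
        euclNorm ((A t).mulVec (r t)) ≤ κ * (b - t) * supNorm a b r) →
      (∫ t in a..b, euclNorm ((A t).mulVec (r t))) ≥ lam * intNorm a b r := by
  set c := b - min (α / 2) ((b - a) / 2)
  have hac : a < c := by have := min_le_right (α / 2) ((b - a) / 2); linarith
  have hcb : c < b := sub_lt_self b (by positivity)
  have hA_cont : ContinuousOn A (Icc a b) :=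
    continuousOn_pi.2 fun i => continuousOn_pi.2 fun j => (hA i j).continuousOn
  have hA_inj : ∀ t ∈ Icc a c, Function.Injective (A t).mulVec := by
    intro t ht
    refine mulVec_injective_of_det_mul_ne_zero (C := (A t)ᵀ) (hB t ▸ ?_)
    rcases ht.1.eq_or_lt with rfl | hat
    · exact hdeta
    · exact hdet t ⟨hat, ht.2.trans_lt hcb⟩
  obtain ⟨m, hm, hmA⟩ := exists_pos_mul_euclNorm_le_euclNorm_mulVec isCompact_Icc
    (hA_cont.mono (Icc_subset_Icc_right hcb.le)) hA_inj
  refine ⟨m / 2, by positivity, fun r hr hαr _ => ?_⟩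
  have hM : 0 ≤ supNorm a b r :=
    (euclNorm_nonneg _).trans (euclNorm_le_supNorm hr (left_mem_Icc.2 hab.le))
  have htail : 2 * ((b - c) * supNorm a b r) ≤ intNorm a b r := by
    have : b - c ≤ α / 2 := by simp [c]
    nlinarith
  exact half_mul_integral_le_integral_of_le_on_head hac.le hcb.le
    ((hA_cont.matrix_mulVec hr).euclNorm.intervalIntegrable_of_Icc hab.le)
    (hr.euclNorm.intervalIntegrable_of_Icc hab.le) hm.le (fun t _ => euclNorm_nonneg _)
    (fun t ht => hmA t ht (r t)) (fun t ht => euclNorm_le_supNorm hr ⟨hac.le.trans ht.1, ht.2⟩)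
    htail

theorem stmt9 (n l : ℕ) (hln : l ≤ n) (a b : ℝ) (hab : a < b)
    (A : ℝ → Matrix (Fin n) (Fin l) ℝ)
    (hA : ∀ i j, ContDiffOn ℝ 1 (fun t => A t i j) (Set.Icc a b))
    (B : ℝ → Matrix (Fin l) (Fin l) ℝ) (hB : ∀ t, B t = (A t)ᵀ * A t)
    (hdet : ∀ t ∈ Set.Ioo a b, (B t).det ≠ 0)
    (hdeta : (B a).det ≠ 0) (hdetb : (B b).det = 0)
    (hb : ℝ) (hhb : 0 < hb)
    (hasymb : (fun t => (B (b + t)).det - hb ^ 2 * t ^ 2) =o[𝓝[<] (0 : ℝ)] fun t => t ^ 2)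
    (α γ κ : ℝ) (hα : 0 < α) (hγ : 0 < γ) (hκ : 0 < κ) :
    ∃ lam > 0, ∀ r : ℝ → Fin l → ℝ, ContinuousOn r (Set.Icc a b) →
      intNorm a b r ≥ α * supNorm a b r →
      (∀ t, b - γ < t → t ≤ b → a ≤ t →
        euclNorm ((A t).mulVec (r t)) ≤ κ * (b - t) * supNorm a b r) →
      (∫ t in a..b, euclNorm ((A t).mulVec (r t))) ≥ lam * intNorm a b r :=
  stmt9_general n l a b hab A hA B hB hdet hdeta α γ κ hα
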